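/- There exists an entrywise nonnegative matrix A of rank 3 that admits no nonnegative factorization A = W Hᵀ with W ∈ ℝ^{d×3} ≥ 0 and H ∈ ℝ^{n×3} ≥ 0, i.e., the nonnegative rank of A can exceed its rank. -/

import Mathlib

/-!
In a nonnegative factorization `A = W Hᵀ` every positive entry `A i j` is witnessed by an index
`k` with `W i k > 0` and `H j k > 0`, and then `A i' j' > 0` whenever `W i' k > 0` and
`H j' k > 0`. Hence positive entries `(i, j)`, `(i', j')` with `A i j' * A i' j = 0`
(a fooling set) need distinct witnesses. The cycle matrix below has rank 3 but a fooling set of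
size 4, so it has no nonnegative factorization of inner dimension 3.
-/

open Matrix

namespace Matrix

section NonnegFactorization

variable {R : Type*} [Semiring R] [LinearOrder R] [IsStrictOrderedRing R]
  {m n κ : Type*} [Fintype κ]

theorem mul_transpose_apply_pos_iff {W : Matrix m κ R} {H : Matrix n κ R}
    (hW : ∀ i k, 0 ≤ W i k) (hH : ∀ j k, 0 ≤ H j k) (i : m) (j : n) :
    0 < (W * Hᵀ) i j ↔ ∃ k, 0 < W i k ∧ 0 < H j k := by
  simp only [mul_apply, transpose_apply]
  rw [Finset.sum_pos_iff_of_nonneg fun k _ => mul_nonneg (hW i k) (hH j k)]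
  refine ⟨fun ⟨k, _, hk⟩ => ⟨k, ?_, ?_⟩, fun ⟨k, hWk, hHk⟩ => ⟨k, Finset.mem_univ k, mul_pos hWk hHk⟩⟩
  · exact (hW i k).lt_of_ne' fun h => by simp [h] at hk
  · exact (hH j k).lt_of_ne' fun h => by simp [h] at hk

def IsFoolingSet {ι : Type*} (A : Matrix m n R) (f : ι → m × n) : Prop :=
  (∀ a, 0 < A (f a).1 (f a).2) ∧
    ∀ a b, a ≠ b → A (f a).1 (f b).2 * A (f b).1 (f a).2 = 0

theorem IsFoolingSet.card_le_of_eq_mul_transpose {ι : Type*} [Fintype ι] {A : Matrix m n R}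
    {f : ι → m × n} (hf : IsFoolingSet A f) {W : Matrix m κ R} {H : Matrix n κ R}
    (hW : ∀ i k, 0 ≤ W i k) (hH : ∀ j k, 0 ≤ H j k) (hA : A = W * Hᵀ) :
    Fintype.card ι ≤ Fintype.card κ := by
  subst hA
  have hpos := mul_transpose_apply_pos_iff hW hH
  choose c hc using fun a => (hpos _ _).1 (hf.1 a)
  refine Fintype.card_le_of_injective c fun a b hab => by_contra fun hne => ?_
  have hab' : 0 < (W * Hᵀ) (f a).1 (f b).2 := (hpos _ _).2 ⟨c a, (hc a).1, hab ▸ (hc b).2⟩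
  have hba : 0 < (W * Hᵀ) (f b).1 (f a).2 := (hpos _ _).2 ⟨c b, (hc b).1, hab ▸ (hc a).2⟩
  exact (mul_pos hab' hba).ne' (hf.2 a b hne)

end NonnegFactorization

end Matrix

/-- The support is the 8-cycle `r₀ c₀ r₁ c₃ r₃ c₂ r₂ c₁ r₀` in the bipartite row–column graph. -/
noncomputable def cycleMatrix : Matrix (Fin 4) (Fin 4) ℝ :=
  !![1, 1, 0, 0; 1, 0, 0, 1; 0, 1, 1, 0; 0, 0, 1, 1]

theorem cycleMatrix_nonneg (i j : Fin 4) : 0 ≤ cycleMatrix i j := by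
  fin_cases i <;> fin_cases j <;> norm_num [cycleMatrix]

-- row 3 = row 1 + row 2 - row 0
theorem cycleMatrix_eq_mul :
    cycleMatrix = (!![1, 0, 0; 0, 1, 0; 0, 0, 1; -1, 1, 1] : Matrix (Fin 4) (Fin 3) ℝ) *
      (!![1, 1, 0, 0; 1, 0, 0, 1; 0, 1, 1, 0] : Matrix (Fin 3) (Fin 4) ℝ) := by
  ext i j
  fin_cases i <;> fin_cases j <;> simp [cycleMatrix, mul_apply, Fin.sum_univ_three]

-- the leading `3 × 3` block is invertible
theorem mul_cycleMatrix_mul_eq_one :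
    (!![1, 0, 0, 0; 0, 1, 0, 0; 0, 0, 1, 0] : Matrix (Fin 3) (Fin 4) ℝ) * cycleMatrix *
      (!![0, 1, 0; 1, -1, 0; -1, 1, 1; 0, 0, 0] : Matrix (Fin 4) (Fin 3) ℝ) = 1 := by
  ext i j
  fin_cases i <;> fin_cases j <;> simp [cycleMatrix, mul_apply, Fin.sum_univ_four, one_apply]

theorem rank_cycleMatrix : cycleMatrix.rank = 3 := by
  apply le_antisymm
  · rw [cycleMatrix_eq_mul]
    exact (rank_mul_le_left _ _).trans (rank_le_width _)
  · calc 3 = (1 : Matrix (Fin 3) (Fin 3) ℝ).rank := by simp [rank_one]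
      _ = _ := by rw [← mul_cycleMatrix_mul_eq_one]
      _ ≤ _ := rank_mul_le_left _ _
      _ ≤ cycleMatrix.rank := rank_mul_le_right _ _

theorem isFoolingSet_cycleMatrix : cycleMatrix.IsFoolingSet ![(0, 0), (1, 3), (2, 1), (3, 2)] := by
  constructor
  · intro a
    fin_cases a <;> simp [cycleMatrix]
  · intro a b hab
    fin_cases a <;> fin_cases b <;> simp_all [cycleMatrix]

/-- There is an entrywise nonnegative matrix of rank 3 admitting no nonnegative
factorization `W Hᵀ` with inner dimension 3: nonnegative rank can exceed rank. -/
theorem stmt13 : ∃ (d n : ℕ) (A : Matrix (Fin d) (Fin n) ℝ),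
    (∀ i j, 0 ≤ A i j) ∧ A.rank = 3 ∧
    ¬ ∃ (W : Matrix (Fin d) (Fin 3) ℝ) (H : Matrix (Fin n) (Fin 3) ℝ),
      (∀ i j, 0 ≤ W i j) ∧ (∀ i j, 0 ≤ H i j) ∧ A = W * Hᵀ := by
  refine ⟨4, 4, cycleMatrix, cycleMatrix_nonneg, rank_cycleMatrix, ?_⟩
  rintro ⟨W, H, hW, hH, hA⟩
  have four_le_three := isFoolingSet_cycleMatrix.card_le_of_eq_mul_transpose hW hH hA
  simp at four_le_three
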